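/- Let 𝒴 = {y₁, …, y_N} and 𝒲 = {w₁, …, w_M} be nonempty finite point sets in ℝⁿ. Then there exist constants C₀ > 0 and C > 0 (depending only on the two point sets) such that for all sufficiently large α > 0, |d'_H(𝒴, 𝒲) − H_α(𝒴, 𝒲)| ≤ C₀ e^{−α C}. -/
import Mathlib


/-- The Boltzmann operator `B_α(x) = (∑ i, x i · e^{α x i}) / (∑ i, e^{α x i})`. -/
noncomputable def boltzmann {n : ℕ} (α : ℝ) (x : Fin n → ℝ) : ℝ :=
  (∑ i, x i * Real.exp (α * x i)) / (∑ i, Real.exp (α * x i))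

/-- The modified Hausdorff distance
`d'_H(𝒴, 𝒲) = max_i (min_k dⁱ_k) + max_k (min_i dⁱ_k)` between two nonempty finite
families of points, where `dⁱ_k = ‖y i − w k‖`. -/
noncomputable def modifiedHausdorff {n N M : ℕ} (hN : 0 < N) (hM : 0 < M)
    (y : Fin N → EuclideanSpace ℝ (Fin n)) (w : Fin M → EuclideanSpace ℝ (Fin n)) : ℝ :=
  Finset.univ.sup' (Finset.univ_nonempty_iff.mpr (Fin.pos_iff_nonempty.mp hN))
      (fun i => Finset.univ.inf' (Finset.univ_nonempty_iff.mpr (Fin.pos_iff_nonempty.mp hM))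
        (fun k => dist (y i) (w k))) +
    Finset.univ.sup' (Finset.univ_nonempty_iff.mpr (Fin.pos_iff_nonempty.mp hM))
      (fun k => Finset.univ.inf' (Finset.univ_nonempty_iff.mpr (Fin.pos_iff_nonempty.mp hN))
        (fun i => dist (y i) (w k)))

/-- The Hausdorff Approximation from Node-wise Distances (HAND):
`H_α(𝒴, 𝒲) = B_α((B_{−α}(dⁱ_·))_i) + B_α((B_{−α}(d·_k))_k)` with `dⁱ_k = ‖y i − w k‖`. -/
noncomputable def hand {n N M : ℕ} (α : ℝ)
    (y : Fin N → EuclideanSpace ℝ (Fin n)) (w : Fin M → EuclideanSpace ℝ (Fin n)) : ℝ :=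
  boltzmann α (fun i : Fin N => boltzmann (-α) (fun k : Fin M => dist (y i) (w k))) +
    boltzmann α (fun k : Fin M => boltzmann (-α) (fun i : Fin N => dist (y i) (w k)))

open Finset Real

lemma sum_exp_pos {n : ℕ} (hn : 0 < n) (α : ℝ) (x : Fin n → ℝ) :
    0 < ∑ i, Real.exp (α * x i) := by
  apply Finset.sum_pos (fun i _ => Real.exp_pos _)
  exact univ_nonempty_iff.mpr (Fin.pos_iff_nonempty.mp hn)

lemma sup'_sub_boltzmann {n : ℕ} (hn : 0 < n) (α : ℝ) (x : Fin n → ℝ)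
    (he : (univ : Finset (Fin n)).Nonempty) :
    0 ≤ univ.sup' he x - boltzmann α x ∧
      univ.sup' he x - boltzmann α x ≤
        ∑ i, (univ.sup' he x - x i) * Real.exp (-(α * (univ.sup' he x - x i))) := by
  set m := univ.sup' he x with hm
  have hS : 0 < ∑ i, Real.exp (α * x i) := sum_exp_pos hn α x
  have hkey : m - boltzmann α x
      = (∑ i, (m - x i) * Real.exp (α * x i)) / (∑ i, Real.exp (α * x i)) := by
    rw [boltzmann, eq_div_iff hS.ne', sub_mul, div_mul_cancel₀ _ hS.ne']
    simp [sub_mul, Finset.sum_sub_distrib, Finset.mul_sum]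
  have hle : ∀ i, x i ≤ m := fun i => Finset.le_sup' x (mem_univ i)
  have hNnonneg : 0 ≤ ∑ i, (m - x i) * Real.exp (α * x i) :=
    Finset.sum_nonneg fun i _ => mul_nonneg (by linarith [hle i]) (Real.exp_pos _).le
  constructor
  · rw [hkey]; positivity
  · rw [hkey]
    obtain ⟨i₀, -, hi₀⟩ := Finset.exists_mem_eq_sup' he x
    have hSM : Real.exp (α * m) ≤ ∑ i, Real.exp (α * x i) := by
      rw [hm, hi₀]
      exact Finset.single_le_sum (f := fun i => Real.exp (α * x i))
        (fun i _ => (Real.exp_pos _).le) (mem_univ i₀)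
    calc (∑ i, (m - x i) * Real.exp (α * x i)) / (∑ i, Real.exp (α * x i))
        ≤ (∑ i, (m - x i) * Real.exp (α * x i)) / Real.exp (α * m) :=
          div_le_div_of_nonneg_left hNnonneg (Real.exp_pos _) hSM
      _ = ∑ i, (m - x i) * Real.exp (-(α * (m - x i))) := by
          rw [Finset.sum_div]
          refine Finset.sum_congr rfl fun i _ => ?_
          rw [mul_div_assoc, ← Real.exp_sub]
          ring_nf

lemma inf'_le_boltzmann {n : ℕ} (hn : 0 < n) (α : ℝ) (x : Fin n → ℝ)
    (he : (univ : Finset (Fin n)).Nonempty) :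
    univ.inf' he x ≤ boltzmann α x := by
  set m := univ.inf' he x with hm
  have hS : 0 < ∑ i, Real.exp (α * x i) := sum_exp_pos hn α x
  have hkey : boltzmann α x - m
      = (∑ i, (x i - m) * Real.exp (α * x i)) / (∑ i, Real.exp (α * x i)) := by
    rw [boltzmann, eq_div_iff hS.ne', sub_mul, div_mul_cancel₀ _ hS.ne']
    simp [sub_mul, Finset.sum_sub_distrib, Finset.mul_sum]
  have hle : ∀ i, m ≤ x i := fun i => Finset.inf'_le x (mem_univ i)
  have : 0 ≤ boltzmann α x - m := by
    rw [hkey]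
    apply div_nonneg _ hS.le
    exact Finset.sum_nonneg fun i _ => mul_nonneg (by linarith [hle i]) (Real.exp_pos _).le
  linarith

lemma boltzmann_neg {n : ℕ} (α : ℝ) (x : Fin n → ℝ) :
    boltzmann (-α) x = -boltzmann α (fun i => -x i) := by
  rw [boltzmann, boltzmann, ← neg_div]
  congr 1
  · rw [← Finset.sum_neg_distrib]
    refine Finset.sum_congr rfl fun i _ => ?_
    ring_nf
  · refine Finset.sum_congr rfl fun i _ => ?_
    ring_nf

/-- Exponential approximation of the max by the Boltzmann operator, for a fixed vector. -/
lemma boltzmann_sup'_approx {n : ℕ} (hn : 0 < n) (x : Fin n → ℝ)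
    (he : (univ : Finset (Fin n)).Nonempty) :
    ∃ C > (0:ℝ), ∃ c > (0:ℝ), ∀ α ≥ (0:ℝ),
      |boltzmann α x - univ.sup' he x| ≤ C * Real.exp (-α * c) := by
  set m := univ.sup' he x with hm
  have hle : ∀ i, x i ≤ m := fun i => Finset.le_sup' x (mem_univ i)
  by_cases hT : ∀ i, x i = m
  · refine ⟨1, one_pos, 1, one_pos, fun α hα => ?_⟩
    have h1 := (sup'_sub_boltzmann hn α x he).1
    have h2 := (sup'_sub_boltzmann hn α x he).2
    have hz : (∑ i, (m - x i) * Real.exp (-(α * (m - x i)))) = 0 := by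
      apply Finset.sum_eq_zero; intro i _; rw [hT i]; ring
    rw [← hm] at h1 h2
    rw [hz] at h2
    have : boltzmann α x - m = 0 := by linarith
    rw [this, abs_zero]
    positivity
  · push_neg at hT
    obtain ⟨j, hj⟩ := hT
    set T : Finset (Fin n) := univ.filter (fun i => x i < m) with hTdef
    have hTne : T.Nonempty := ⟨j, by simp [hTdef, lt_of_le_of_ne (hle j) hj]⟩
    set δ := T.inf' hTne (fun i => m - x i) with hδ
    have hδpos : 0 < δ := by
      rw [hδ]
      apply Finset.lt_inf'_iff hTne (f := fun i => m - x i) (a := (0:ℝ)) |>.mpr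
      intro i hi
      have : x i < m := (Finset.mem_filter.mp hi).2
      linarith
    set D := T.sup' hTne (fun i => m - x i) with hD
    have hDpos : 0 < D := by
      obtain ⟨i1, hi1⟩ := hTne
      calc (0:ℝ) < δ := hδpos
        _ ≤ m - x i1 := Finset.inf'_le (fun i => m - x i) hi1
        _ ≤ D := Finset.le_sup' (fun i => m - x i) hi1
    refine ⟨n * D, by positivity, δ, hδpos, fun α hα => ?_⟩
    have h1 := (sup'_sub_boltzmann hn α x he).1
    have h2 := (sup'_sub_boltzmann hn α x he).2
    rw [← hm] at h1 h2
    have hbound : (∑ i, (m - x i) * Real.exp (-(α * (m - x i)))) ≤ n * D * Real.exp (-α * δ) := by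
      calc (∑ i, (m - x i) * Real.exp (-(α * (m - x i))))
          ≤ ∑ _i : Fin n, D * Real.exp (-α * δ) := by
            apply Finset.sum_le_sum
            intro i _
            by_cases hi : x i < m
            · have hiT : i ∈ T := by simp [hTdef, hi]
              have h3 : δ ≤ m - x i := Finset.inf'_le (fun i => m - x i) hiT
              have h4 : m - x i ≤ D := Finset.le_sup' (fun i => m - x i) hiT
              have h5 : Real.exp (-(α * (m - x i))) ≤ Real.exp (-α * δ) := by
                apply Real.exp_le_exp.mpr
                have : α * δ ≤ α * (m - x i) := mul_le_mul_of_nonneg_left h3 hα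
                linarith
              calc (m - x i) * Real.exp (-(α * (m - x i)))
                  ≤ D * Real.exp (-(α * (m - x i))) :=
                    mul_le_mul_of_nonneg_right h4 (Real.exp_pos _).le
                _ ≤ D * Real.exp (-α * δ) :=
                    mul_le_mul_of_nonneg_left h5 hDpos.le
            · have : x i = m := le_antisymm (hle i) (not_lt.mp hi)
              rw [this]
              simp
              positivity
          _ = n * D * Real.exp (-α * δ) := by
            rw [Finset.sum_const, card_univ]
            simp [mul_assoc]
      
    rw [abs_sub_comm, abs_of_nonneg h1]
    linarith

lemma inf'_eq_neg_sup' {n : ℕ} (x : Fin n → ℝ) (he : (univ : Finset (Fin n)).Nonempty) :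
    univ.inf' he x = -univ.sup' he (fun i => -x i) := by
  apply le_antisymm
  · obtain ⟨i₀, -, hi₀⟩ := Finset.exists_mem_eq_sup' he (fun i => -x i)
    rw [hi₀, neg_neg]
    exact Finset.inf'_le x (mem_univ i₀)
  · apply Finset.le_inf'
    intro i _
    have : -x i ≤ univ.sup' he (fun i => -x i) := Finset.le_sup' (fun i => -x i) (mem_univ i)
    linarith

/-- Exponential approximation of the min by the Boltzmann operator with negative parameter. -/
lemma boltzmann_inf'_approx {n : ℕ} (hn : 0 < n) (x : Fin n → ℝ)
    (he : (univ : Finset (Fin n)).Nonempty) :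
    ∃ C > (0:ℝ), ∃ c > (0:ℝ), ∀ α ≥ (0:ℝ),
      |boltzmann (-α) x - univ.inf' he x| ≤ C * Real.exp (-α * c) := by
  obtain ⟨C, hC, c, hc, h⟩ := boltzmann_sup'_approx hn (fun i => -x i) he
  refine ⟨C, hC, c, hc, fun α hα => ?_⟩
  rw [boltzmann_neg, inf'_eq_neg_sup']
  rw [show -boltzmann α (fun i => -x i) - -univ.sup' he (fun i => -x i)
      = -(boltzmann α (fun i => -x i) - univ.sup' he (fun i => -x i)) by ring, abs_neg]
  exact h α hα

/-- Perturbed exponential approximation of the max by the Boltzmann operator. -/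
lemma boltzmann_perturbed_sup' {n : ℕ} (hn : 0 < n) (g : Fin n → ℝ)
    (he : (univ : Finset (Fin n)).Nonempty) :
    ∃ C > (0:ℝ), ∃ c > (0:ℝ), ∃ ε₀ > (0:ℝ), ∀ α ≥ (0:ℝ), ∀ ε, 0 ≤ ε → ε ≤ ε₀ →
      ∀ x : Fin n → ℝ, (∀ i, |x i - g i| ≤ ε) →
      |boltzmann α x - univ.sup' he g| ≤ (2*n+1)*ε + C * Real.exp (-α * c) := by
  set m := univ.sup' he g with hm
  have hleg : ∀ i, g i ≤ m := fun i => Finset.le_sup' g (mem_univ i)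
  obtain ⟨i₀, -, hi₀⟩ := Finset.exists_mem_eq_sup' he g
  by_cases hT : ∀ i, g i = m
  · refine ⟨1, one_pos, 1, one_pos, 1, one_pos, fun α hα ε hε0 hε1 x hx => ?_⟩
    have hub : boltzmann α x ≤ m + ε := by
      have h1 := (sup'_sub_boltzmann hn α x he).1
      have h2 : univ.sup' he x ≤ m + ε := by
        apply Finset.sup'_le
        intro i _
        have h1 := abs_le.mp (hx i)
        have h2 := hT i
        linarith [h1.2]
      linarith
    have hlb : m - ε ≤ boltzmann α x := by
      have h1 := inf'_le_boltzmann hn α x he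
      have h2 : m - ε ≤ univ.inf' he x := by
        apply Finset.le_inf'
        intro i _
        have h2 := hT i
        linarith [(abs_le.mp (hx i)).1]
      linarith
    rw [abs_le]
    constructor
    · have : (0:ℝ) < Real.exp (-α * 1) := Real.exp_pos _
      have hn1 : (1:ℝ) ≤ (2*n+1) := by
        have : (0:ℝ) ≤ n := Nat.cast_nonneg n
        linarith
      nlinarith
    · have : (0:ℝ) < Real.exp (-α * 1) := Real.exp_pos _
      have hn1 : (1:ℝ) ≤ (2*n+1) := by
        have : (0:ℝ) ≤ n := Nat.cast_nonneg n
        linarith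
      nlinarith
  · push_neg at hT
    obtain ⟨j, hj⟩ := hT
    set T : Finset (Fin n) := univ.filter (fun i => g i < m) with hTdef
    have hTne : T.Nonempty := ⟨j, by simp [hTdef, lt_of_le_of_ne (hleg j) hj]⟩
    set δ := T.inf' hTne (fun i => m - g i) with hδ
    have hδpos : 0 < δ := by
      rw [hδ]
      apply Finset.lt_inf'_iff hTne (f := fun i => m - g i) (a := (0:ℝ)) |>.mpr
      intro i hi
      have : g i < m := (Finset.mem_filter.mp hi).2
      linarith
    set D := univ.sup' he (fun i => m - g i) with hD
    have hDδ : δ ≤ D := by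
      obtain ⟨i1, hi1⟩ := hTne
      calc δ ≤ m - g i1 := Finset.inf'_le (fun i => m - g i) hi1
        _ ≤ D := Finset.le_sup' (fun i => m - g i) (mem_univ i1)
    have hDpos : 0 < D := lt_of_lt_of_le hδpos hDδ
    refine ⟨n * (D + δ), by positivity, δ/2, by positivity, δ/4, by positivity,
      fun α hα ε hε0 hε1 x hx => ?_⟩
    have hxl : ∀ i, g i - ε ≤ x i := fun i => by linarith [(abs_le.mp (hx i)).1]
    have hxu : ∀ i, x i ≤ g i + ε := fun i => by linarith [(abs_le.mp (hx i)).2]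
    set Mx := univ.sup' he x with hMx
    have hMxu : Mx ≤ m + ε := by
      apply Finset.sup'_le
      intro i _
      linarith [hxu i, hleg i]
    have hMxl : m - ε ≤ Mx := by
      have : x i₀ ≤ Mx := Finset.le_sup' x (mem_univ i₀)
      have := hxl i₀
      rw [← hi₀] at *
      linarith [hxl i₀, Finset.le_sup' x (mem_univ i₀)]
    have h1 := (sup'_sub_boltzmann hn α x he).1
    have h2 := (sup'_sub_boltzmann hn α x he).2
    rw [← hMx] at h1 h2
    have hbound : (∑ i, (Mx - x i) * Real.exp (-(α * (Mx - x i))))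
        ≤ 2*n*ε + n * (D + δ) * Real.exp (-α * (δ/2)) := by
      have hterm : ∀ i : Fin n, (Mx - x i) * Real.exp (-(α * (Mx - x i)))
          ≤ 2*ε + (D + δ) * Real.exp (-α * (δ/2)) := by
        intro i
        have hxiMx : x i ≤ Mx := Finset.le_sup' x (mem_univ i)
        by_cases hi : g i < m
        · have hiT : i ∈ T := by simp [hTdef, hi]
          have h3 : δ ≤ m - g i := Finset.inf'_le (fun i => m - g i) hiT
          have h4 : m - g i ≤ D := Finset.le_sup' (fun i => m - g i) (mem_univ i)
          have ht1 : δ/2 ≤ Mx - x i := by linarith [hxu i]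
          have ht2 : Mx - x i ≤ D + δ := by
            have : ε ≤ δ/4 := hε1
            linarith [hxl i]
          have h5 : Real.exp (-(α * (Mx - x i))) ≤ Real.exp (-α * (δ/2)) := by
            apply Real.exp_le_exp.mpr
            have : α * (δ/2) ≤ α * (Mx - x i) := mul_le_mul_of_nonneg_left ht1 hα
            linarith
          have : (Mx - x i) * Real.exp (-(α * (Mx - x i)))
              ≤ (D + δ) * Real.exp (-α * (δ/2)) := by
            calc (Mx - x i) * Real.exp (-(α * (Mx - x i)))
                ≤ (D + δ) * Real.exp (-(α * (Mx - x i))) :=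
                  mul_le_mul_of_nonneg_right ht2 (Real.exp_pos _).le
              _ ≤ (D + δ) * Real.exp (-α * (δ/2)) :=
                  mul_le_mul_of_nonneg_left h5 (by positivity)
          linarith
        · have hgi : g i = m := le_antisymm (hleg i) (not_lt.mp hi)
          have ht2 : Mx - x i ≤ 2*ε := by
            have := hxl i
            rw [hgi] at this
            linarith
          have hexple : Real.exp (-(α * (Mx - x i))) ≤ 1 := by
            apply Real.exp_le_one_iff.mpr
            have : 0 ≤ α * (Mx - x i) := mul_nonneg hα (by linarith)
            linarith
          have hterm1 : (Mx - x i) * Real.exp (-(α * (Mx - x i))) ≤ 2*ε := by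
            calc (Mx - x i) * Real.exp (-(α * (Mx - x i)))
                ≤ (2*ε) * Real.exp (-(α * (Mx - x i))) :=
                  mul_le_mul_of_nonneg_right ht2 (Real.exp_pos _).le
              _ ≤ (2*ε) * 1 := mul_le_mul_of_nonneg_left hexple (by linarith)
              _ = 2*ε := by ring
          have : 0 ≤ (D + δ) * Real.exp (-α * (δ/2)) := by positivity
          linarith
      calc (∑ i, (Mx - x i) * Real.exp (-(α * (Mx - x i))))
          ≤ ∑ _i : Fin n, (2*ε + (D + δ) * Real.exp (-α * (δ/2))) :=
            Finset.sum_le_sum (fun i _ => hterm i)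
        _ = 2*n*ε + n * (D + δ) * Real.exp (-α * (δ/2)) := by
            rw [Finset.sum_const, card_univ]
            simp [Fintype.card_fin]
            ring
    have habs : |boltzmann α x - m| ≤ (Mx - boltzmann α x) + ε := by
      rw [abs_le]
      constructor
      · linarith [hMxu]
      · linarith [hMxl]
    have hncast : (0:ℝ) ≤ n := Nat.cast_nonneg n
    calc |boltzmann α x - m| ≤ (Mx - boltzmann α x) + ε := habs
      _ ≤ (2*n*ε + n * (D + δ) * Real.exp (-α * (δ/2))) + ε := by linarith
      _ = (2*n+1)*ε + n * (D + δ) * Real.exp (-α * (δ/2)) := by ring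

/-- One side of the HAND approximation. -/
lemma hand_side_approx {N M : ℕ} (hN : 0 < N) (hM : 0 < M)
    (heN : (univ : Finset (Fin N)).Nonempty) (heM : (univ : Finset (Fin M)).Nonempty)
    (d : Fin N → Fin M → ℝ) :
    ∃ C > (0:ℝ), ∃ c > (0:ℝ), ∃ α₀ > (0:ℝ), ∀ α ≥ α₀,
      |boltzmann α (fun i => boltzmann (-α) (d i)) -
        univ.sup' heN (fun i => univ.inf' heM (d i))| ≤ C * Real.exp (-α * c) := by
  have hch : ∀ i : Fin N, ∃ C > (0:ℝ), ∃ c > (0:ℝ), ∀ α ≥ (0:ℝ),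
      |boltzmann (-α) (d i) - univ.inf' heM (d i)| ≤ C * Real.exp (-α * c) :=
    fun i => boltzmann_inf'_approx hM (d i) heM
  choose Cf hCf cf hcf hb using hch
  set C₁ := univ.sup' heN Cf with hC₁
  set c₁ := univ.inf' heN cf with hc₁
  obtain ⟨iw, hiw⟩ := id heN
  have hC₁pos : 0 < C₁ := lt_of_lt_of_le (hCf iw) (Finset.le_sup' Cf hiw)
  have hc₁pos : 0 < c₁ := by
    rw [hc₁]
    exact Finset.lt_inf'_iff heN (f := cf) (a := (0:ℝ)) |>.mpr (fun i _ => hcf i)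
  have hεbound : ∀ α ≥ (0:ℝ), ∀ i : Fin N,
      |boltzmann (-α) (d i) - univ.inf' heM (d i)| ≤ C₁ * Real.exp (-α * c₁) := by
    intro α hα i
    calc |boltzmann (-α) (d i) - univ.inf' heM (d i)|
        ≤ Cf i * Real.exp (-α * cf i) := hb i α hα
      _ ≤ C₁ * Real.exp (-α * c₁) := by
          apply mul_le_mul (Finset.le_sup' Cf (mem_univ i))
          · apply Real.exp_le_exp.mpr
            have h3 : c₁ ≤ cf i := Finset.inf'_le cf (mem_univ i)
            nlinarith
          · positivity
          · exact hC₁pos.le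
  obtain ⟨C₂, hC₂, c₂, hc₂, ε₀, hε₀, hP⟩ :=
    boltzmann_perturbed_sup' hN (fun i => univ.inf' heM (d i)) heN
  set α₀ := max 1 (Real.log (C₁/ε₀) / c₁ + 1) with hα₀
  have hα₀pos : (0:ℝ) < α₀ := lt_of_lt_of_le one_pos (le_max_left _ _)
  refine ⟨(2*N+1)*C₁ + C₂, by positivity, min c₁ c₂, lt_min hc₁pos hc₂, α₀, hα₀pos,
    fun α hα => ?_⟩
  have hα0 : (0:ℝ) ≤ α := le_trans hα₀pos.le hα
  have hεsmall : C₁ * Real.exp (-α * c₁) ≤ ε₀ := by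
    have h4 : Real.log (C₁/ε₀) / c₁ + 1 ≤ α := le_trans (le_max_right _ _) hα
    have h5 : Real.log (C₁/ε₀) ≤ α * c₁ := by
      have := (div_le_iff₀ hc₁pos).mp (by linarith : Real.log (C₁/ε₀) / c₁ ≤ α)
      linarith [this]
    have h6 : Real.exp (-α * c₁) ≤ C₁⁻¹ * ε₀ := by
      rw [neg_mul]
      calc Real.exp (-(α * c₁)) ≤ Real.exp (-Real.log (C₁/ε₀)) :=
            Real.exp_le_exp.mpr (by linarith)
        _ = C₁⁻¹ * ε₀ := by
            rw [Real.exp_neg, Real.exp_log (by positivity)]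
            field_simp
    calc C₁ * Real.exp (-α * c₁) ≤ C₁ * (C₁⁻¹ * ε₀) :=
          mul_le_mul_of_nonneg_left h6 hC₁pos.le
      _ = ε₀ := by field_simp
  have hmain := hP α hα0 (C₁ * Real.exp (-α * c₁)) (by positivity) hεsmall
    (fun i => boltzmann (-α) (d i)) (hεbound α hα0)
  have hexp1 : Real.exp (-α * c₁) ≤ Real.exp (-α * min c₁ c₂) := by
    apply Real.exp_le_exp.mpr
    have := min_le_left c₁ c₂
    nlinarith
  have hexp2 : Real.exp (-α * c₂) ≤ Real.exp (-α * min c₁ c₂) := by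
    apply Real.exp_le_exp.mpr
    have := min_le_right c₁ c₂
    nlinarith
  have hNc : (0:ℝ) ≤ 2*N+1 := by positivity
  calc |boltzmann α (fun i => boltzmann (-α) (d i)) -
        univ.sup' heN (fun i => univ.inf' heM (d i))|
      ≤ (2*N+1) * (C₁ * Real.exp (-α * c₁)) + C₂ * Real.exp (-α * c₂) := hmain
    _ ≤ (2*N+1) * (C₁ * Real.exp (-α * min c₁ c₂)) + C₂ * Real.exp (-α * min c₁ c₂) := by
        have := mul_le_mul_of_nonneg_left hexp1 hC₁pos.le
        have := mul_le_mul_of_nonneg_left hexp2 hC₂.le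
        nlinarith
    _ = ((2*N+1)*C₁ + C₂) * Real.exp (-α * min c₁ c₂) := by ring

theorem hand_approximates_modifiedHausdorff {n N M : ℕ} (hN : 0 < N) (hM : 0 < M)
    (y : Fin N → EuclideanSpace ℝ (Fin n)) (w : Fin M → EuclideanSpace ℝ (Fin n)) :
    ∃ C₀ > (0 : ℝ), ∃ C > (0 : ℝ), ∃ α₀ > (0 : ℝ), ∀ α ≥ α₀,
      |modifiedHausdorff hN hM y w - hand α y w| ≤ C₀ * Real.exp (-α * C) := by
  have heN : (univ : Finset (Fin N)).Nonempty :=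
    univ_nonempty_iff.mpr (Fin.pos_iff_nonempty.mp hN)
  have heM : (univ : Finset (Fin M)).Nonempty :=
    univ_nonempty_iff.mpr (Fin.pos_iff_nonempty.mp hM)
  obtain ⟨Ca, hCa, ca, hca, αa, hαa, ha⟩ :=
    hand_side_approx hN hM heN heM (fun i k => dist (y i) (w k))
  obtain ⟨Cb, hCb, cb, hcb, αb, hαb, hb⟩ :=
    hand_side_approx hM hN heM heN (fun k i => dist (y i) (w k))
  refine ⟨Ca + Cb, by positivity, min ca cb, lt_min hca hcb, max αa αb,
    lt_max_of_lt_left hαa, fun α hα => ?_⟩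
  have hαa' : α ≥ αa := le_trans (le_max_left _ _) hα
  have hαb' : α ≥ αb := le_trans (le_max_right _ _) hα
  have h1 := ha α hαa'
  have h2 := hb α hαb'
  have hα0 : (0:ℝ) ≤ α := le_trans (le_trans hαa.le (le_max_left _ _)) hα
  have hexp1 : Real.exp (-α * ca) ≤ Real.exp (-α * min ca cb) := by
    apply Real.exp_le_exp.mpr
    nlinarith [min_le_left ca cb]
  have hexp2 : Real.exp (-α * cb) ≤ Real.exp (-α * min ca cb) := by
    apply Real.exp_le_exp.mpr
    nlinarith [min_le_right ca cb]
  set SA := univ.sup' heN (fun i => univ.inf' heM (fun k => dist (y i) (w k))) with hSA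
  set SB := univ.sup' heM (fun k => univ.inf' heN (fun i => dist (y i) (w k))) with hSB
  set HA := boltzmann α (fun i => boltzmann (-α) (fun k => dist (y i) (w k))) with hHA
  set HB := boltzmann α (fun k => boltzmann (-α) (fun i => dist (y i) (w k))) with hHB
  have e1 : modifiedHausdorff hN hM y w = SA + SB := rfl
  have e2 : hand α y w = HA + HB := rfl
  rw [e1, e2]
  calc |SA + SB - (HA + HB)| = |(SA - HA) + (SB - HB)| := by ring_nf
    _ ≤ |SA - HA| + |SB - HB| := abs_add_le _ _
    _ = |HA - SA| + |HB - SB| := by rw [abs_sub_comm, abs_sub_comm SB]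
    _ ≤ Ca * Real.exp (-α * ca) + Cb * Real.exp (-α * cb) := add_le_add h1 h2
    _ ≤ Ca * Real.exp (-α * min ca cb) + Cb * Real.exp (-α * min ca cb) :=
        add_le_add (mul_le_mul_of_nonneg_left hexp1 hCa.le)
          (mul_le_mul_of_nonneg_left hexp2 hCb.le)
    _ = (Ca + Cb) * Real.exp (-α * min ca cb) := by ring
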